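/- The unitary Cayley graph of Z_n for n = p₁^{r₁}⋯p_t^{r_t} (distinct primes p₁ < ⋯ < p_t) is connected whenever n > 1, and has diameter: 1 if t = 1 and r₁ = 1; 2 if t = 1 and r₁ > 1; 2 if t ≥ 2 and p₁ ≥ 3; 3 if t ≥ 2 and p₁ = 2. -/

import Mathlib

/-- The unitary Cayley graph of a commutative ring: vertices are ring elements,
with `x ~ y` iff `x ≠ y` and `x - y` is a unit. -/
def unitaryCayley (R : Type*) [CommRing R] : SimpleGraph R where
  Adj x y := x ≠ y ∧ IsUnit (x - y)
  symm := by
    constructor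
    rintro x y ⟨hne, hu⟩
    exact ⟨hne.symm, by simpa [neg_sub] using hu.neg⟩
  loopless := by constructor; rintro x ⟨h, -⟩; exact h rfl

/-- A packing `k`-coloring: every vertex gets a color in `{1, …, k}`, and any two
distinct vertices with the same color `i` are at distance greater than `i`
(`edist` equals `⊤` for unreachable pairs, which counts as distance greater than `i`). -/
def SimpleGraph.IsPackingColoring {V : Type*} (G : SimpleGraph V) (k : ℕ) (c : V → ℕ) : Prop :=
  (∀ v, 1 ≤ c v ∧ c v ≤ k) ∧
    ∀ u v, u ≠ v → c u = c v → (c u : ℕ∞) < G.edist u v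

/-- The packing chromatic number: the least `k` admitting a packing `k`-coloring. -/
noncomputable def SimpleGraph.packingChromaticNumber {V : Type*} (G : SimpleGraph V) : ℕ :=
  sInf {k | ∃ c : V → ℕ, G.IsPackingColoring k c}

/-- The independence number: the largest cardinality of a set of pairwise
nonadjacent vertices. -/
noncomputable def SimpleGraph.indepNumNat {V : Type*} (G : SimpleGraph V) : ℕ :=
  sSup {n | ∃ s : Finset V, (∀ u ∈ s, ∀ v ∈ s, u ≠ v → ¬ G.Adj u v) ∧ s.card = n}

/-- The tensor (direct, categorical) product of two simple graphs. -/
def tensorProd {V W : Type*} (G : SimpleGraph V) (H : SimpleGraph W) :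
    SimpleGraph (V × W) where
  Adj a b := G.Adj a.1 b.1 ∧ H.Adj a.2 b.2
  symm := ⟨fun _ _ ⟨h1, h2⟩ => ⟨h1.symm, h2.symm⟩⟩
  loopless := ⟨fun a h => G.loopless.irrefl a.1 h.1⟩

/-- The tensor (direct, categorical) product of a family of simple graphs. -/
def tensorPi {ι : Type*} [Nonempty ι] {V : ι → Type*} (G : ∀ i, SimpleGraph (V i)) :
    SimpleGraph (∀ i, V i) where
  Adj a b := ∀ i, (G i).Adj (a i) (b i)
  symm := ⟨fun _ _ h i => (h i).symm⟩
  loopless := ⟨fun a h => (G (Classical.arbitrary ι)).loopless.irrefl _ (h _)⟩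

/-!
Two vertices `u`, `v` are at distance at most `k` exactly when `u - v` is a sum of at most `k`
units. In `ZMod n` every even `d` is a sum of two units: if `Q` is the product of the primes of
`n` not dividing `d`, then `d = (Q - d) + (2d - Q)`, and modulo each prime `p ∣ n` one of `Q`, `d`
vanishes while the other does not (for `p ∤ d` this uses that `p` is odd, which `d` even forces).
Since every element is even or one more than an even element, the diameter is at most `3`, and
at most `2` when `n` is odd or a prime power (then every non-unit is even). Conversely, a prime
`p ∣ n` with `p < n` is a nonzero non-unit, and for even `n` all units are odd, so an odd prime
divisor of `n` is a non-unit that is not a sum of two units.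
-/

open SimpleGraph

section UnitSums

variable {R : Type*} [CommRing R]

def IsSumOfAtMostUnits (k : ℕ) (x : R) : Prop :=
  ∃ l : List R, l.length ≤ k ∧ (∀ a ∈ l, IsUnit a) ∧ l.sum = x

lemma isSumOfAtMostUnits_zero_iff {x : R} : IsSumOfAtMostUnits 0 x ↔ x = 0 := by
  constructor
  · rintro ⟨l, hl, -, rfl⟩
    simp [List.eq_nil_of_length_eq_zero (Nat.le_zero.mp hl)]
  · rintro rfl
    exact ⟨[], le_rfl, by simp, rfl⟩

lemma isSumOfAtMostUnits_one_iff {x : R} : IsSumOfAtMostUnits 1 x ↔ x = 0 ∨ IsUnit x := by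
  constructor
  · rintro ⟨l, hl, hu, rfl⟩
    match l, hl with
    | [], _ => simp
    | [a], _ => exact Or.inr (by simpa using hu)
  · rintro (rfl | hx)
    · exact ⟨[], by simp, by simp, rfl⟩
    · exact ⟨[x], by simp, by simpa, by simp⟩

lemma IsSumOfAtMostUnits.mono {j k : ℕ} {x : R} (hx : IsSumOfAtMostUnits j x) (hjk : j ≤ k) :
    IsSumOfAtMostUnits k x :=
  let ⟨l, hl, hu, hsum⟩ := hx
  ⟨l, hl.trans hjk, hu, hsum⟩

lemma IsSumOfAtMostUnits.add {j k : ℕ} {x y : R} (hx : IsSumOfAtMostUnits j x)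
    (hy : IsSumOfAtMostUnits k y) : IsSumOfAtMostUnits (j + k) (x + y) := by
  obtain ⟨l, hl, hu, rfl⟩ := hx
  obtain ⟨m, hm, hv, rfl⟩ := hy
  refine ⟨l ++ m, by simp; omega, fun a ha => ?_, List.sum_append⟩
  rcases List.mem_append.mp ha with ha | ha
  exacts [hu a ha, hv a ha]

/-- Units map to `1` in `ZMod 2`, so a sum of two units maps to `0`. -/
lemma IsSumOfAtMostUnits.isUnit_of_map_eq_one (f : R →+* ZMod 2) {x : R}
    (hx : IsSumOfAtMostUnits 2 x) (hfx : f x = 1) : IsUnit x := by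
  obtain ⟨l, hl, hu, rfl⟩ := hx
  have hodd : ∀ a ∈ l, f a = 1 := fun a ha =>
    (by decide : ∀ z : ZMod 2, z ≠ 0 → z = 1) _ ((hu a ha).map f).ne_zero
  match l, hl with
  | [], _ => simp at hfx
  | [a], _ => simpa using hu
  | [a, b], _ =>
    simp only [List.sum_cons, List.sum_nil, add_zero, map_add] at hfx
    rw [hodd a (by simp), hodd b (by simp)] at hfx
    exact absurd hfx (by decide)

end UnitSums

section Graph

variable {R : Type*} [CommRing R]

lemma unitaryCayley_adj_iff [Nontrivial R] {x y : R} :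
    (unitaryCayley R).Adj x y ↔ IsUnit (x - y) :=
  ⟨And.right, fun h => ⟨sub_ne_zero.mp h.ne_zero, h⟩⟩

lemma isSumOfAtMostUnits_of_walk {u v : R} (w : (unitaryCayley R).Walk u v) :
    IsSumOfAtMostUnits w.length (u - v) := by
  induction w with
  | nil => exact isSumOfAtMostUnits_zero_iff.mpr (sub_self _)
  | @cons u m v h _ ih =>
    have hstep := (isSumOfAtMostUnits_one_iff.mpr (Or.inr h.2)).add ih
    rwa [sub_add_sub_cancel, add_comm] at hstep

lemma unitaryCayley_edist_add_sum_le [Nontrivial R] (v : R) (l : List R)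
    (hl : ∀ a ∈ l, IsUnit a) : (unitaryCayley R).edist (v + l.sum) v ≤ l.length := by
  induction l with
  | nil => simp
  | cons a l ih =>
    have hadj : (unitaryCayley R).Adj (v + (a + l.sum)) (v + l.sum) :=
      unitaryCayley_adj_iff.mpr (by simpa using hl a (by simp))
    calc (unitaryCayley R).edist (v + (a + l.sum)) v
        ≤ (unitaryCayley R).edist (v + (a + l.sum)) (v + l.sum)
          + (unitaryCayley R).edist (v + l.sum) v := SimpleGraph.edist_triangle
      _ ≤ 1 + l.length := by
        rw [edist_eq_one_iff_adj.mpr hadj]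
        gcongr
        exact ih fun b hb => hl b (by simp [hb])
      _ = (a :: l).length := by simp [add_comm]

lemma unitaryCayley_edist_le_iff [Nontrivial R] {u v : R} {k : ℕ} :
    (unitaryCayley R).edist u v ≤ k ↔ IsSumOfAtMostUnits k (u - v) := by
  constructor
  · intro h
    obtain ⟨w, hw⟩ := exists_walk_of_edist_ne_top (ne_top_of_le_ne_top (ENat.natCast_ne_top k) h)
    exact (isSumOfAtMostUnits_of_walk w).mono (by rw [← hw] at h; exact_mod_cast h)
  · rintro ⟨l, hl, hu, hsum⟩
    rw [show u = v + l.sum by rw [hsum]; ring]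
    exact (unitaryCayley_edist_add_sum_le v l hu).trans (by exact_mod_cast hl)

lemma unitaryCayley_ediam_le [Nontrivial R] {k : ℕ} (h : ∀ x : R, IsSumOfAtMostUnits k x) :
    (unitaryCayley R).ediam ≤ k :=
  ediam_le_of_edist_le fun _ _ => unitaryCayley_edist_le_iff.mpr (h _)

lemma unitaryCayley_diam_eq [Nontrivial R] {k : ℕ} (h : ∀ x : R, IsSumOfAtMostUnits (k + 1) x)
    {x : R} (hx : ¬ IsSumOfAtMostUnits k x) : (unitaryCayley R).diam = k + 1 := by
  have hfar : ((k + 1 : ℕ) : ℕ∞) ≤ (unitaryCayley R).edist x 0 := by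
    by_contra hlt
    rw [not_le, Nat.cast_add_one, ENat.lt_add_one_iff (ENat.natCast_ne_top k),
      unitaryCayley_edist_le_iff, sub_zero] at hlt
    exact hx hlt
  have hediam : (unitaryCayley R).ediam = (k + 1 : ℕ) :=
    le_antisymm (unitaryCayley_ediam_le h) (hfar.trans edist_le_ediam)
  simp [diam, hediam]

end Graph

lemma Nat.Prime.dvd_prod_primeFactors_filter_iff {p n : ℕ} (hp : p.Prime) (hpn : p ∣ n)
    (hn : n ≠ 0) (P : ℕ → Prop) [DecidablePred P] :
    p ∣ ∏ q ∈ n.primeFactors with P q, q ↔ P p := by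
  rw [Prime.dvd_finsetProd_iff hp.prime]
  constructor
  · rintro ⟨q, hq, hpq⟩
    obtain ⟨hqn, hPq⟩ := Finset.mem_filter.mp hq
    rwa [(Nat.prime_dvd_prime_iff_eq hp (Nat.prime_of_mem_primeFactors hqn)).mp hpq]
  · exact fun hP => ⟨p, Finset.mem_filter.mpr ⟨Nat.mem_primeFactors.mpr ⟨hp, hpn, hn⟩, hP⟩,
      dvd_rfl⟩

namespace ZMod

variable {n : ℕ}

lemma isUnit_of_forall_prime_castHom_ne_zero [NeZero n] {x : ZMod n}
    (h : ∀ p, p.Prime → (hpn : p ∣ n) → castHom hpn (ZMod p) x ≠ 0) : IsUnit x := by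
  rw [← natCast_zmod_val x, isUnit_iff_coprime]
  refine Nat.coprime_of_dvd fun p hp hpx hpn => h p hp hpn ?_
  rw [← natCast_zmod_val x, map_natCast, natCast_eq_zero_iff]
  exact hpx

lemma isSumOfAtMostUnits_two_of_even [NeZero n] {d : ZMod n} (hd : Even d) :
    IsSumOfAtMostUnits 2 d := by
  set Q := ∏ p ∈ n.primeFactors with ¬ p ∣ d.val, p
  refine ⟨[Q - d, 2 * d - Q], le_rfl, ?_, by simp; ring⟩
  suffices ∀ p, p.Prime → (hpn : p ∣ n) →
      castHom hpn (ZMod p) (Q - d) ≠ 0 ∧ castHom hpn (ZMod p) (2 * d - Q) ≠ 0 by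
    simp only [List.mem_cons, List.not_mem_nil, or_false, forall_eq_or_imp, forall_eq]
    exact ⟨isUnit_of_forall_prime_castHom_ne_zero fun p hp hpn => (this p hp hpn).1,
      isUnit_of_forall_prime_castHom_ne_zero fun p hp hpn => (this p hp hpn).2⟩
  intro p hp hpn
  have : Fact p.Prime := ⟨hp⟩
  have hδ : castHom hpn (ZMod p) d = 0 ↔ p ∣ d.val := by
    rw [← natCast_eq_zero_iff, ← map_natCast (castHom hpn (ZMod p)), natCast_zmod_val]
  have hQ : (Q : ZMod p) = 0 ↔ ¬ castHom hpn (ZMod p) d = 0 := by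
    rw [natCast_eq_zero_iff, hp.dvd_prod_primeFactors_filter_iff hpn (NeZero.ne n), hδ]
  have hδeven := hd.map (castHom hpn (ZMod p))
  rw [map_sub, map_sub, map_mul, map_natCast, map_ofNat]
  generalize castHom hpn (ZMod p) d = δ at hQ hδeven ⊢
  by_cases hδ0 : δ = 0
  · have hQ0 : (Q : ZMod p) ≠ 0 := fun h => hQ.mp h hδ0
    simp [hδ0, hQ0]
  · have h2 : (2 : ZMod p) ≠ 0 := by
      obtain ⟨r, rfl⟩ := hδeven
      rintro h2
      exact hδ0 (by rw [← two_mul, h2, zero_mul])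
    simp [hδ0, hQ.mpr hδ0, h2]

lemma even_or_odd (x : ZMod n) : Even x ∨ Odd x := by
  obtain ⟨z, rfl⟩ := intCast_surjective x
  exact (Int.even_or_odd z).imp (·.map (Int.castRingHom _)) (·.map (Int.castRingHom _))

lemma isSumOfAtMostUnits_three [NeZero n] (x : ZMod n) : IsSumOfAtMostUnits 3 x := by
  rcases even_or_odd x with hx | hx
  · exact (isSumOfAtMostUnits_two_of_even hx).mono (by norm_num)
  · have h := (isSumOfAtMostUnits_one_iff.mpr (Or.inr isUnit_one)).add
      (isSumOfAtMostUnits_two_of_even (hx.sub_odd odd_one))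
    rwa [add_sub_cancel] at h

lemma even_of_not_two_dvd (hn : ¬ 2 ∣ n) (x : ZMod n) : Even x := by
  have h2 : IsUnit (2 : ZMod n) := by exact_mod_cast isUnit_prime_of_not_dvd Nat.prime_two hn
  exact even_iff_two_dvd.mpr h2.dvd

lemma even_of_not_isUnit_of_isPrimePow (hn : IsPrimePow n) {x : ZMod n} (hx : ¬ IsUnit x) :
    Even x := by
  obtain ⟨p, k, hp, hk, rfl⟩ := (isPrimePow_nat_iff _).mp hn
  by_cases hp2 : p = 2
  · subst hp2
    rw [← natCast_zmod_val x, isUnit_iff_coprime, Nat.coprime_pow_right_iff hk,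
      Nat.coprime_two_right, Nat.not_odd_iff_even] at hx
    rw [← natCast_zmod_val x]
    exact hx.natCast
  · refine even_of_not_two_dvd (fun h2 => hp2 ?_) x
    exact ((Nat.prime_dvd_prime_iff_eq Nat.prime_two hp).mp (Nat.prime_two.dvd_of_dvd_pow h2)).symm

lemma isSumOfAtMostUnits_two_of_isPrimePow (hn : IsPrimePow n) (x : ZMod n) :
    IsSumOfAtMostUnits 2 x := by
  have : NeZero n := ⟨hn.ne_zero⟩
  by_cases hx : IsUnit x
  · exact (isSumOfAtMostUnits_one_iff.mpr (Or.inr hx)).mono one_le_two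
  · exact isSumOfAtMostUnits_two_of_even (even_of_not_isUnit_of_isPrimePow hn hx)

lemma not_isSumOfAtMostUnits_one_of_prime_dvd {p : ℕ} (hp : p.Prime) (hpn : p ∣ n)
    (hlt : p < n) : ¬ IsSumOfAtMostUnits 1 (p : ZMod n) := by
  rw [isSumOfAtMostUnits_one_iff, isUnit_prime_iff_not_dvd hp, natCast_eq_zero_iff, not_or,
    not_not]
  exact ⟨Nat.not_dvd_of_pos_of_lt hp.pos hlt, hpn⟩

lemma not_isSumOfAtMostUnits_two_of_odd_prime_dvd (hn : 2 ∣ n) {q : ℕ} (hq : q.Prime)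
    (hq2 : q ≠ 2) (hqn : q ∣ n) : ¬ IsSumOfAtMostUnits 2 (q : ZMod n) := fun h =>
  (isUnit_prime_iff_not_dvd hq).mp
    (h.isUnit_of_map_eq_one (castHom hn (ZMod 2))
      (by rw [map_natCast, natCast_eq_one_iff_odd]; exact hq.odd_of_ne_two hq2)) hqn

end ZMod

theorem stmt8 (n : ℕ) (hn : 1 < n) :
    (unitaryCayley (ZMod n)).Connected ∧
    ((n.primeFactors.card = 1 ∧ n.factorization n.minFac = 1) →
      (unitaryCayley (ZMod n)).diam = 1) ∧
    ((n.primeFactors.card = 1 ∧ 1 < n.factorization n.minFac) →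
      (unitaryCayley (ZMod n)).diam = 2) ∧
    ((2 ≤ n.primeFactors.card ∧ 3 ≤ n.minFac) →
      (unitaryCayley (ZMod n)).diam = 2) ∧
    ((2 ≤ n.primeFactors.card ∧ n.minFac = 2) →
      (unitaryCayley (ZMod n)).diam = 3) := by
  have : Fact (1 < n) := ⟨hn⟩
  have : NeZero n := ⟨by omega⟩
  have hminFac := Nat.minFac_prime hn.ne'
  refine ⟨connected_of_ediam_ne_top (ne_top_of_le_ne_top (ENat.natCast_ne_top 3)
    (unitaryCayley_ediam_le ZMod.isSumOfAtMostUnits_three)), ?_, ?_, ?_, ?_⟩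
  · rintro ⟨hcard, hexp⟩
    have hpow := (isPrimePow_iff_card_primeFactors_eq_one.mpr hcard).minFac_pow_factorization_eq
    rw [hexp, pow_one] at hpow
    have : Fact n.Prime := ⟨hpow ▸ hminFac⟩
    exact unitaryCayley_diam_eq (k := 0)
      (fun x => isSumOfAtMostUnits_one_iff.mpr ((em (x = 0)).imp_right Ne.isUnit))
      (x := 1) (isSumOfAtMostUnits_zero_iff.not.mpr one_ne_zero)
  · rintro ⟨hcard, hexp⟩
    have hpow := isPrimePow_iff_card_primeFactors_eq_one.mpr hcard
    have hlt : n.minFac < n := by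
      conv_rhs => rw [← hpow.minFac_pow_factorization_eq]
      exact lt_self_pow₀ hminFac.one_lt hexp
    exact unitaryCayley_diam_eq (k := 1) (ZMod.isSumOfAtMostUnits_two_of_isPrimePow hpow)
      (ZMod.not_isSumOfAtMostUnits_one_of_prime_dvd hminFac (Nat.minFac_dvd n) hlt)
  · rintro ⟨hcard, hmin⟩
    have hodd : ¬ 2 ∣ n := fun h => by have := Nat.minFac_le_of_dvd le_rfl h; omega
    have hlt : n.minFac < n := (Nat.not_prime_iff_minFac_lt hn).mp fun hp => by
      simp [hp.primeFactors] at hcard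
    exact unitaryCayley_diam_eq (k := 1)
      (fun x => ZMod.isSumOfAtMostUnits_two_of_even (ZMod.even_of_not_two_dvd hodd x))
      (ZMod.not_isSumOfAtMostUnits_one_of_prime_dvd hminFac (Nat.minFac_dvd n) hlt)
  · rintro ⟨hcard, hmin⟩
    obtain ⟨q, hq, hq2⟩ := Finset.exists_mem_ne hcard 2
    exact unitaryCayley_diam_eq (k := 2) ZMod.isSumOfAtMostUnits_three
      (ZMod.not_isSumOfAtMostUnits_two_of_odd_prime_dvd (hmin ▸ Nat.minFac_dvd n)
        (Nat.prime_of_mem_primeFactors hq) hq2 (Nat.dvd_of_mem_primeFactors hq))
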